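/- arXiv:2012.07013 — 2 statements merged into one kernel-verified Lean document; each statement's English description precedes it below -/
import Mathlib

section
/- Let u ∈ C¹(Ω̄) and let x* ∈ Ω be a local minimum of u. Then for every ε > 0 there exists N > 0 such that ‖∇_n u(x*)‖ < ε for all n > N; in particular ∇_n u(x*) → 0 as n → ∞. -/
/-!
At an interior local minimum the derivative of `u` vanishes, so the difference quotient
`|u x - u y| / ‖x - y‖` is at most `c` on a small ball `‖x - y‖ ≤ δ`; outside it, the quotient is
at most `2 sup |u| / δ`. Since `ρ_n` has mass one, the norm of `∇_n u(x)` is at most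
`D (c + 2 sup |u| / δ · ∫_{‖z‖ > δ} ρ_n)`, and the tail integral tends to zero.
-/

open MeasureTheory Filter Topology Metric

noncomputable section

abbrev Euc (D : ℕ) := EuclideanSpace ℝ (Fin D)

/-- The standing hypotheses on the sequence of radial kernels `ρ n`. -/
structure IsKernelSeq (D : ℕ) (ρ : ℕ → Euc D → ℝ) : Prop where
  nonneg : ∀ n x, 0 ≤ ρ n x
  radial : ∀ n x y, ‖x‖ = ‖y‖ → ρ n x = ρ n y
  integral_one : ∀ n, ∫ x, ρ n x = 1
  tail : ∀ δ : ℝ, 0 < δ →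
    Tendsto (fun n => ∫ x in {x : Euc D | δ < ‖x‖}, ρ n x) atTop (nhds 0)

/-- A bounded, connected, simply connected open domain. -/
structure NiceDomain (D : ℕ) (Ω : Set (Euc D)) : Prop where
  isOpen : IsOpen Ω
  bounded : Bornology.IsBounded Ω
  connected : IsConnected Ω
  simplyConnected : SimplyConnectedSpace Ω

/-- The nonlocal gradient of `u` over the set `Ω` with kernel `ρ`:
`∇_ρ u(x) = D ∫_Ω ((u x - u y)/‖x-y‖) ((x-y)/‖x-y‖) ρ(x-y) dy`. -/
def nlGrad (D : ℕ) (Ω : Set (Euc D)) (ρ : Euc D → ℝ) (u : Euc D → ℝ) (x : Euc D) : Euc D :=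
  (D : ℝ) • ∫ y in Ω, (((u x - u y) / ‖x - y‖ ^ 2) * ρ (x - y)) • (x - y)

section DifferenceQuotient

variable {E : Type*} [NormedAddCommGroup E] [NormedSpace ℝ E]

lemma IsLocalMin.exists_abs_sub_div_norm_le {u : E → ℝ} {x : E} (hmin : IsLocalMin u x)
    (hd : DifferentiableAt ℝ u x) {c : ℝ} (hc : 0 < c) :
    ∃ δ > 0, ∀ y, ‖x - y‖ ≤ δ → |u x - u y| / ‖x - y‖ ≤ c := by
  have hzero : HasFDerivAt u (0 : E →L[ℝ] ℝ) x :=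
    hmin.hasFDerivAt_eq_zero hd.hasFDerivAt ▸ hd.hasFDerivAt
  obtain ⟨δ, hδ, hball⟩ := nhds_basis_closedBall.eventually_iff.mp (hzero.isLittleO.def hc)
  refine ⟨δ, hδ, fun y hy => div_le_of_le_mul₀ (norm_nonneg _) hc.le ?_⟩
  have hy' : y ∈ closedBall x δ := by rwa [mem_closedBall, dist_eq_norm, norm_sub_rev]
  simpa [abs_sub_comm (u x), norm_sub_rev x] using hball hy'

lemma norm_div_norm_sq_mul_smul (a r : ℝ) (v : E) :
    ‖((a / ‖v‖ ^ 2) * r) • v‖ = |a| / ‖v‖ * |r| := by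
  rcases eq_or_ne v 0 with rfl | hv
  · simp
  · have hv' : ‖v‖ ≠ 0 := norm_ne_zero_iff.mpr hv
    rw [norm_smul, Real.norm_eq_abs, abs_mul, abs_div, abs_of_nonneg (sq_nonneg ‖v‖)]
    field_simp

end DifferenceQuotient

section KernelIntegral

variable {E : Type*} [NormedAddCommGroup E] [MeasurableSpace E] [BorelSpace E]
  {μ : Measure E} [μ.IsAddLeftInvariant] [μ.IsNegInvariant]

lemma setIntegral_mul_kernel_le {ρ q : E → ℝ} {s : Set E} {x : E} {c K δ : ℝ}
    (hρ0 : ∀ z, 0 ≤ ρ z) (hρ1 : ∫ z, ρ z ∂μ = 1) (hs : MeasurableSet s) (hc : 0 ≤ c) (hK : 0 ≤ K)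
    (hq0 : ∀ y ∈ s, 0 ≤ q y) (hnear : ∀ y ∈ s, ‖x - y‖ ≤ δ → q y ≤ c)
    (hfar : ∀ y ∈ s, δ < ‖x - y‖ → q y ≤ K) :
    ∫ y in s, q y * ρ (x - y) ∂μ ≤ c + K * ∫ z in {z | δ < ‖z‖}, ρ z ∂μ := by
  set T : Set E := {z | δ < ‖z‖}
  have hT : MeasurableSet T := measurableSet_lt measurable_const measurable_norm
  have hρi : Integrable ρ μ := integrable_of_integral_eq_one hρ1
  have hbound_int : Integrable (fun y => c * ρ (x - y) + K * T.indicator ρ (x - y)) μ :=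
    ((hρi.comp_sub_left x).const_mul c).add (((hρi.indicator hT).comp_sub_left x).const_mul K)
  have hbound : ∀ y ∈ s, q y * ρ (x - y) ≤ c * ρ (x - y) + K * T.indicator ρ (x - y) := by
    intro y hy
    by_cases hxy : x - y ∈ T
    · rw [Set.indicator_of_mem hxy]
      nlinarith [hfar y hy hxy, hρ0 (x - y), mul_nonneg hc (hρ0 (x - y))]
    · rw [Set.indicator_of_notMem hxy, mul_zero, add_zero]
      exact mul_le_mul_of_nonneg_right (hnear y hy (not_lt.mp hxy)) (hρ0 _)
  calc ∫ y in s, q y * ρ (x - y) ∂μ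
      ≤ ∫ y in s, (c * ρ (x - y) + K * T.indicator ρ (x - y)) ∂μ := by
        refine integral_mono_of_nonneg ?_ hbound_int.integrableOn ?_
        · filter_upwards [ae_restrict_mem hs] with y hy using mul_nonneg (hq0 y hy) (hρ0 _)
        · filter_upwards [ae_restrict_mem hs] with y hy using hbound y hy
    _ ≤ ∫ y, (c * ρ (x - y) + K * T.indicator ρ (x - y)) ∂μ :=
        setIntegral_le_integral hbound_int (Eventually.of_forall fun y =>
          add_nonneg (mul_nonneg hc (hρ0 _))
            (mul_nonneg hK (T.indicator_nonneg (fun z _ => hρ0 z) _)))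
    _ = c + K * ∫ z in T, ρ z ∂μ := by
        rw [integral_add ((hρi.comp_sub_left x).const_mul c)
            (((hρi.indicator hT).comp_sub_left x).const_mul K), integral_const_mul,
          integral_const_mul, integral_sub_left_eq_self, integral_sub_left_eq_self, hρ1,
          integral_indicator hT, mul_one]

variable [NormedSpace ℝ E] {u : E → ℝ} {s : Set E} {x : E}

lemma norm_setIntegral_nlGrad_integrand_le {ρ : E → ℝ} {c K δ : ℝ}
    (hρ0 : ∀ z, 0 ≤ ρ z) (hρ1 : ∫ z, ρ z ∂μ = 1) (hs : MeasurableSet s) (hc : 0 ≤ c)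
    (hK : 0 ≤ K) (hnear : ∀ y ∈ s, ‖x - y‖ ≤ δ → |u x - u y| / ‖x - y‖ ≤ c)
    (hfar : ∀ y ∈ s, δ < ‖x - y‖ → |u x - u y| / ‖x - y‖ ≤ K) :
    ‖∫ y in s, (((u x - u y) / ‖x - y‖ ^ 2) * ρ (x - y)) • (x - y) ∂μ‖
      ≤ c + K * ∫ z in {z | δ < ‖z‖}, ρ z ∂μ :=
  calc _ ≤ ∫ y in s, ‖(((u x - u y) / ‖x - y‖ ^ 2) * ρ (x - y)) • (x - y)‖ ∂μ :=
        norm_integral_le_integral_norm _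
    _ = ∫ y in s, |u x - u y| / ‖x - y‖ * ρ (x - y) ∂μ := by
        simp_rw [norm_div_norm_sq_mul_smul, abs_of_nonneg (hρ0 _)]
    _ ≤ _ := setIntegral_mul_kernel_le hρ0 hρ1 hs hc hK (fun y _ => by positivity) hnear hfar

lemma IsLocalMin.tendsto_setIntegral_nlGrad_integrand {ρ : ℕ → E → ℝ} {K : ℝ}
    (hmin : IsLocalMin u x) (hd : DifferentiableAt ℝ u x) (hρ0 : ∀ n z, 0 ≤ ρ n z)
    (hρ1 : ∀ n, ∫ z, ρ n z ∂μ = 1)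
    (htail : ∀ δ > 0, Tendsto (fun n => ∫ z in {z | δ < ‖z‖}, ρ n z ∂μ) atTop (𝓝 0))
    (hs : MeasurableSet s) (hK : 0 ≤ K) (hosc : ∀ y ∈ s, |u x - u y| ≤ K) :
    Tendsto (fun n => ∫ y in s, (((u x - u y) / ‖x - y‖ ^ 2) * ρ n (x - y)) • (x - y) ∂μ)
      atTop (𝓝 0) := by
  refine Metric.tendsto_nhds.mpr fun ε hε => ?_
  obtain ⟨δ, hδ, hnear⟩ := hmin.exists_abs_sub_div_norm_le hd (half_pos hε)
  have hfar : ∀ y ∈ s, δ < ‖x - y‖ → |u x - u y| / ‖x - y‖ ≤ K / δ :=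
    fun y hy hδy => div_le_div₀ hK (hosc y hy) hδ hδy.le
  have hbound : Tendsto (fun n => ε / 2 + K / δ * ∫ z in {z | δ < ‖z‖}, ρ n z ∂μ)
      atTop (𝓝 (ε / 2)) := by
    simpa using ((htail δ hδ).const_mul (K / δ)).const_add (ε / 2)
  filter_upwards [hbound.eventually_lt_const (half_lt_self hε)] with n hn
  rw [dist_zero_right]
  exact (norm_setIntegral_nlGrad_integrand_le (hρ0 n) (hρ1 n) hs (half_pos hε).le
    (by positivity) (fun y _ => hnear y) hfar).trans_lt hn

end KernelIntegral

theorem nlGrad_small_at_localMin_general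
    (D : ℕ) (Ω : Set (Euc D)) (hΩ : NiceDomain D Ω)
    (ρ : ℕ → Euc D → ℝ) (hρ : IsKernelSeq D ρ)
    (u : Euc D → ℝ) (hu : ContDiffOn ℝ 1 u (closure Ω))
    (xstar : Euc D) (hx : xstar ∈ Ω) (hmin : IsLocalMinOn u Ω xstar) :
    ∀ ε : ℝ, 0 < ε → ∃ N : ℕ, ∀ n > N, ‖nlGrad D Ω (ρ n) u xstar‖ < ε := by
  have hΩx : Ω ∈ 𝓝 xstar := hΩ.isOpen.mem_nhds hx
  have hd : DifferentiableAt ℝ u xstar :=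
    (hu.differentiableOn one_ne_zero).differentiableAt (mem_of_superset hΩx subset_closure)
  obtain ⟨M, hM⟩ := hΩ.bounded.isCompact_closure.exists_bound_of_continuousOn hu.continuousOn
  have hM0 : 0 ≤ M := (norm_nonneg _).trans (hM xstar (subset_closure hx))
  have hosc : ∀ y ∈ Ω, |u xstar - u y| ≤ 2 * M := fun y hy => by
    simpa only [Real.norm_eq_abs, two_mul] using (norm_sub_le (u xstar) (u y)).trans
      (add_le_add (hM xstar (subset_closure hx)) (hM y (subset_closure hy)))
  have hgrad : Tendsto (fun n => nlGrad D Ω (ρ n) u xstar) atTop (𝓝 0) := by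
    simpa [nlGrad] using ((hmin.isLocalMin hΩx).tendsto_setIntegral_nlGrad_integrand hd
      hρ.nonneg hρ.integral_one hρ.tail hΩ.isOpen.measurableSet (by positivity) hosc).const_smul
      (D : ℝ)
  intro ε hε
  obtain ⟨N, hN⟩ := Metric.tendsto_atTop.mp hgrad ε hε
  exact ⟨N, fun n hn => by simpa using hN n hn.le⟩

/-- if `u ∈ C¹(Ω̄)` and `x* ∈ Ω` is a local minimum of `u`, then for every
`ε > 0` there is `N` with `‖∇_n u(x*)‖ < ε` for all `n > N`. -/
theorem nlGrad_small_at_localMin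
    (D : ℕ) (hD : 0 < D) (Ω : Set (Euc D)) (hΩ : NiceDomain D Ω)
    (ρ : ℕ → Euc D → ℝ) (hρ : IsKernelSeq D ρ)
    (u : Euc D → ℝ) (hu : ContDiffOn ℝ 1 u (closure Ω))
    (xstar : Euc D) (hx : xstar ∈ Ω) (hmin : IsLocalMinOn u Ω xstar) :
    ∀ ε : ℝ, 0 < ε → ∃ N : ℕ, ∀ n > N, ‖nlGrad D Ω (ρ n) u xstar‖ < ε :=
  nlGrad_small_at_localMin_general D Ω hΩ ρ hρ u hu xstar hx hmin

end
end

section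
/- Let u ∈ C²(Ω) ∩ Lip(Ω, M), and run classical gradient descent x^{k+1} = x^k − α^k ∇u(x^k) and nonlocal gradient descent x^{k+1,n} = x^{k,n} − α^k ∇_n u(x^{k,n}) from the same initial point x^0 = x^{0,n} for all n, with the same stepsizes α^k > 0 satisfying Σ_{m=1}^K α^m < 1 for every K > 0, all iterates remaining in a compact subset of Ω. Then for each k and each ε > 0 there exists N > 0 such that for all n > N, ‖x^m − x^{m,n}‖ < ε for m = 1, …, k+1. -/
open MeasureTheory Filter Topology Metric

noncomputable section

open scoped NNReal

/-!
After the substitution `y = x - z`, split the integral defining `∇ₙu(x)` into the ball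
`‖z‖ < δ` and its complement. On the ball the mean value inequality gives
`u x - u (x - z) = ⟪∇u(x), z⟫ + O(η ‖z‖)`, where `η` bounds the oscillation of `Du` on `B(x, δ)`,
and radial symmetry of `ρₙ` gives `D ∫_{‖z‖<δ} ⟪g, z⟫ / ‖z‖² ρₙ(z) z dz = (∫_{‖z‖<δ} ρₙ) g`:
the mixed moments `∫ zᵢ zⱼ / ‖z‖² ρₙ` vanish under the reflection of one coordinate, while the
`D` diagonal ones coincide under coordinate swaps and add up to the mass. Off the ball the
integrand is at most `M ρₙ(z)` by the Lipschitz bound, and the mass of `ρₙ` there tends to `0`.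
Uniform continuity of `Du` near the compact set `V` makes this uniform in `x ∈ V`, so `∇ₙu → ∇u`
uniformly on `V`. Each iterate depends continuously on the previous one, so by induction
`x^{m,n} → x^m` for every `m`, and finitely many iterates converge simultaneously.
-/

lemma norm_div_norm_sq_mul_smul_le {E : Type*} [NormedAddCommGroup E] [NormedSpace ℝ E]
    {a r C : ℝ} {z : E} (hC : 0 ≤ C) (h : |a| ≤ C * ‖z‖) :
    ‖(a / ‖z‖ ^ 2 * r) • z‖ ≤ C * |r| := by
  rcases eq_or_ne z 0 with rfl | hz
  · simpa using mul_nonneg hC (abs_nonneg r)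
  have hz : 0 < ‖z‖ := norm_pos_iff.mpr hz
  calc ‖(a / ‖z‖ ^ 2 * r) • z‖ = |a| / ‖z‖ * |r| := by
        rw [norm_smul, Real.norm_eq_abs, abs_mul, abs_div, abs_of_pos (by positivity : 0 < ‖z‖ ^ 2)]
        field_simp
    _ ≤ C * |r| := by
        gcongr
        exact (div_le_iff₀ hz).mpr h

lemma norm_setIntegral_le_of_norm_le_mul {α E : Type*} [MeasurableSpace α] {μ : Measure α}
    [NormedAddCommGroup E] [NormedSpace ℝ E] {f : α → E} {ρ : α → ℝ} {s : Set α} {C : ℝ}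
    (hs : MeasurableSet s) (hρ : IntegrableOn ρ s μ) (h : ∀ z ∈ s, ‖f z‖ ≤ C * ρ z) :
    ‖∫ z in s, f z ∂μ‖ ≤ C * ∫ z in s, ρ z ∂μ := by
  rw [← integral_const_mul]
  exact norm_integral_le_of_norm_le (hρ.const_mul C) (ae_restrict_of_forall_mem hs h)

lemma abs_sub_sub_inner_gradient_le {E : Type*} [NormedAddCommGroup E] [InnerProductSpace ℝ E]
    [CompleteSpace E] {u : E → ℝ} {x z : E} {δ η : ℝ}
    (hdiff : ∀ w ∈ ball x δ, DifferentiableAt ℝ u w)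
    (hη : ∀ w ∈ ball x δ, ‖fderiv ℝ u w - fderiv ℝ u x‖ ≤ η) (hz : ‖z‖ < δ) :
    |u x - u (x - z) - inner ℝ (gradient u x) z| ≤ η * ‖z‖ := by
  have hxz : x - z ∈ ball x δ := by simpa [dist_eq_norm] using hz
  have := (convex_ball x δ).norm_image_sub_le_of_norm_fderiv_le' hdiff hη
    (mem_ball_self ((norm_nonneg z).trans_lt hz)) hxz
  rw [sub_sub_cancel_left, norm_neg, map_neg, Real.norm_eq_abs, ← abs_neg] at this
  convert this using 2
  rw [gradient, InnerProductSpace.toDual_symm_apply]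
  ring

lemma ContDiffOn.continuousOn_gradient {E : Type*} [NormedAddCommGroup E] [InnerProductSpace ℝ E]
    [CompleteSpace E] {u : E → ℝ} {s : Set E} (hu : ContDiffOn ℝ 1 u s) (hs : IsOpen s) :
    ContinuousOn (gradient u) s :=
  (InnerProductSpace.toDual ℝ E).symm.continuous.comp_continuousOn
    (hu.continuousOn_fderiv_of_isOpen hs le_rfl)

lemma IsCompact.exists_forall_ball_subset_dist_lt {X Y : Type*} [PseudoMetricSpace X]
    [PseudoMetricSpace Y] {V U : Set X} {f : X → Y} (hV : IsCompact V) (hU : IsOpen U)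
    (hVU : V ⊆ U) (hf : ContinuousOn f U) {ε : ℝ} (hε : 0 < ε) :
    ∃ δ > 0, ∀ x ∈ V, ball x δ ⊆ U ∧ ∀ w ∈ ball x δ, dist (f w) (f x) < ε := by
  obtain ⟨r, hr, hrU⟩ := hV.exists_thickening_subset_open hU hVU
  obtain ⟨δ, hδ, hδf⟩ := Metric.mem_uniformity_dist.1 <|
    hV.uniformContinuousAt_of_continuousAt f
      (fun x hx => hf.continuousAt (hU.mem_nhds (hVU hx))) (Metric.dist_mem_uniformity hε)
  refine ⟨min r δ, lt_min hr hδ, fun x hx => ⟨?_, fun w hw => ?_⟩⟩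
  · exact (ball_subset_ball (min_le_left r δ)).trans ((ball_subset_thickening hx r).trans hrU)
  · rw [dist_comm]
    exact hδf (lt_of_lt_of_le (mem_ball'.1 hw) (min_le_right r δ)) hx

section RadialKernel

variable {D : ℕ} {ρ : Euc D → ℝ}

lemma abs_coord_mul_coord_div_norm_sq_le_one (z : Euc D) (i j : Fin D) :
    |z i * z j / ‖z‖ ^ 2| ≤ 1 := by
  rw [abs_div, abs_mul, abs_of_nonneg (sq_nonneg ‖z‖), sq]
  refine div_le_one_of_le₀ ?_ (by positivity)
  exact mul_le_mul (PiLp.norm_apply_le z i) (PiLp.norm_apply_le z j) (abs_nonneg _)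
    (norm_nonneg _)

lemma integrable_coord_mul_coord_div_norm_sq_mul (hρ : Integrable ρ) (i j : Fin D) :
    Integrable fun z : Euc D => z i * z j / ‖z‖ ^ 2 * ρ z := by
  have hmeas : Measurable fun z : Euc D => z i * z j / ‖z‖ ^ 2 := by fun_prop
  exact hρ.bdd_mul (c := 1) hmeas.aestronglyMeasurable
    (Eventually.of_forall fun z => abs_coord_mul_coord_div_norm_sq_le_one z i j)

lemma integral_coord_mul_coord_div_norm_sq_mul_of_ne
    (hrad : ∀ a b : Euc D, ‖a‖ = ‖b‖ → ρ a = ρ b) {i j : Fin D} (hij : i ≠ j) :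
    ∫ z : Euc D, z i * z j / ‖z‖ ^ 2 * ρ z = 0 := by
  let σ : Euc D ≃ₗᵢ[ℝ] Euc D := LinearIsometryEquiv.piLpCongrRight 2
    fun k => if k = j then LinearIsometryEquiv.neg ℝ else LinearIsometryEquiv.refl ℝ ℝ
  have hodd (z : Euc D) :
      σ z i * σ z j / ‖σ z‖ ^ 2 * ρ (σ z) = -(z i * z j / ‖z‖ ^ 2 * ρ z) := by
    have hi : σ z i = z i := by simp [σ, hij]
    have hj : σ z j = -z j := by simp [σ]
    rw [hi, hj, hrad _ _ (σ.norm_map z), σ.norm_map]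
    ring
  have := integral_comp σ fun z : Euc D => z i * z j / ‖z‖ ^ 2 * ρ z
  simp only [hodd, integral_neg] at this
  linarith

lemma integral_coord_sq_div_norm_sq_mul_eq
    (hrad : ∀ a b : Euc D, ‖a‖ = ‖b‖ → ρ a = ρ b) (i j : Fin D) :
    ∫ z : Euc D, z i * z i / ‖z‖ ^ 2 * ρ z = ∫ z : Euc D, z j * z j / ‖z‖ ^ 2 * ρ z := by
  let σ : Euc D ≃ₗᵢ[ℝ] Euc D := LinearIsometryEquiv.piLpCongrLeft 2 ℝ ℝ (Equiv.swap i j)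
  have hσ (z : Euc D) : σ z j = z i := by simp [σ, Equiv.piCongrLeft']
  rw [← integral_comp σ fun z : Euc D => z j * z j / ‖z‖ ^ 2 * ρ z]
  simp only [hσ, σ.norm_map, hrad _ _ (σ.norm_map _)]

lemma integral_coord_sq_div_norm_sq_mul (hρ : Integrable ρ)
    (hrad : ∀ a b : Euc D, ‖a‖ = ‖b‖ → ρ a = ρ b) (k : Fin D) :
    (D : ℝ) * ∫ z : Euc D, z k * z k / ‖z‖ ^ 2 * ρ z = ∫ z : Euc D, ρ z := by
  -- only a.e.: at `z = 0` the left side is `0` since `0 / 0 = 0`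
  have hsum : ∀ᵐ z : Euc D, ∑ i, z i * z i / ‖z‖ ^ 2 * ρ z = ρ z := by
    have : Nonempty (Fin D) := ⟨k⟩
    filter_upwards [Measure.ae_ne volume (0 : Euc D)] with z hz
    rw [← Finset.sum_mul, ← Finset.sum_div, div_mul_eq_mul_div]
    simp_rw [← sq]
    rw [← EuclideanSpace.real_norm_sq_eq, mul_div_cancel_left₀ _ (by positivity)]
  calc (D : ℝ) * ∫ z : Euc D, z k * z k / ‖z‖ ^ 2 * ρ z
      = ∑ i : Fin D, ∫ z : Euc D, z i * z i / ‖z‖ ^ 2 * ρ z := by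
        simp [integral_coord_sq_div_norm_sq_mul_eq hrad _ k]
    _ = ∫ z : Euc D, ρ z := by
        rw [← integral_finsetSum _ fun i _ => integrable_coord_mul_coord_div_norm_sq_mul hρ i i]
        exact integral_congr_ae hsum

lemma integrable_inner_div_norm_sq_mul_smul (hρ : Integrable ρ) (g : Euc D) :
    Integrable fun z : Euc D => (inner ℝ g z / ‖z‖ ^ 2 * ρ z) • z := by
  have hmeas : Measurable fun z : Euc D => inner ℝ g z / ‖z‖ ^ 2 := by fun_prop
  refine hρ.norm.const_mul ‖g‖ |>.mono' ((hmeas.aestronglyMeasurable.mul hρ.1).smul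
    aestronglyMeasurable_id) (Eventually.of_forall fun z => ?_)
  exact norm_div_norm_sq_mul_smul_le (norm_nonneg g) (abs_real_inner_le_norm g z)

theorem smul_integral_inner_div_norm_sq_mul_smul (hρ : Integrable ρ)
    (hrad : ∀ a b : Euc D, ‖a‖ = ‖b‖ → ρ a = ρ b) (g : Euc D) :
    (D : ℝ) • ∫ z : Euc D, (inner ℝ g z / ‖z‖ ^ 2 * ρ z) • z = (∫ z : Euc D, ρ z) • g := by
  ext k
  have hcoord : ∀ z : Euc D, ((inner ℝ g z / ‖z‖ ^ 2 * ρ z) • z) k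
      = ∑ i, g i * (z i * z k / ‖z‖ ^ 2 * ρ z) := by
    intro z
    simp only [PiLp.smul_apply, smul_eq_mul, PiLp.inner_apply, RCLike.inner_apply, conj_trivial,
      Finset.sum_div, Finset.sum_mul]
    exact Finset.sum_congr rfl fun i _ => by ring
  have hint_coord : (∫ z : Euc D, (inner ℝ g z / ‖z‖ ^ 2 * ρ z) • z) k
      = ∫ z : Euc D, ((inner ℝ g z / ‖z‖ ^ 2 * ρ z) • z) k :=
    ((EuclideanSpace.proj k).integral_comp_comm (integrable_inner_div_norm_sq_mul_smul hρ g)).symm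
  rw [PiLp.smul_apply, PiLp.smul_apply, smul_eq_mul, smul_eq_mul, hint_coord]
  simp only [hcoord]
  rw [integral_finsetSum _ fun i _ =>
    (integrable_coord_mul_coord_div_norm_sq_mul hρ i k).const_mul _]
  simp only [integral_const_mul]
  rw [Finset.sum_eq_single k (fun i _ hik => by
      rw [integral_coord_mul_coord_div_norm_sq_mul_of_ne hrad hik, mul_zero])
    (fun h => absurd (Finset.mem_univ k) h)]
  rw [mul_left_comm, integral_coord_sq_div_norm_sq_mul hρ hrad k, mul_comm]

lemma smul_setIntegral_ball_inner_div_norm_sq_mul_smul (hρ : Integrable ρ)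
    (hrad : ∀ a b : Euc D, ‖a‖ = ‖b‖ → ρ a = ρ b) (g : Euc D) (δ : ℝ) :
    (D : ℝ) • ∫ z in ball (0 : Euc D) δ, (inner ℝ g z / ‖z‖ ^ 2 * ρ z) • z
      = (∫ z in ball (0 : Euc D) δ, ρ z) • g := by
  have hrad' : ∀ a b : Euc D, ‖a‖ = ‖b‖ →
      (ball (0 : Euc D) δ).indicator ρ a = (ball (0 : Euc D) δ).indicator ρ b := by
    intro a b hab
    classical
    rw [Set.indicator_apply, Set.indicator_apply, mem_ball_zero_iff, mem_ball_zero_iff, hab,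
      hrad a b hab]
  have := smul_integral_inner_div_norm_sq_mul_smul (hρ.indicator measurableSet_ball) hrad' g
  rw [integral_indicator measurableSet_ball] at this
  rw [← this, ← integral_indicator measurableSet_ball]
  congr 2
  ext1 z
  by_cases hz : z ∈ ball (0 : Euc D) δ
  · rw [Set.indicator_of_mem hz, Set.indicator_of_mem hz]
  · rw [Set.indicator_of_notMem hz, Set.indicator_of_notMem hz, mul_zero, zero_smul]

end RadialKernel

section NonlocalGradient

variable {D : ℕ} {Ω : Set (Euc D)} {ρ u : Euc D → ℝ} {x : Euc D}

def nlIntegrand (ρ u : Euc D → ℝ) (x z : Euc D) : Euc D :=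
  ((u x - u (x - z)) / ‖z‖ ^ 2 * ρ z) • z

lemma nlGrad_eq_smul_setIntegral_nlIntegrand :
    nlGrad D Ω ρ u x = (D : ℝ) • ∫ z in (x - ·) ⁻¹' Ω, nlIntegrand ρ u x z := by
  rw [nlGrad, ← (Measure.measurePreserving_sub_left volume x).setIntegral_preimage_emb
    (MeasurableEquiv.subLeft x).measurableEmbedding]
  simp only [nlIntegrand, sub_sub_cancel]

lemma norm_nlIntegrand_le {K : ℝ≥0} (hu : LipschitzOnWith K u Ω) (hx : x ∈ Ω) {z : Euc D}
    (hz : x - z ∈ Ω) (hρ : 0 ≤ ρ z) : ‖nlIntegrand ρ u x z‖ ≤ K * ρ z := by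
  have hlip : |u x - u (x - z)| ≤ K * ‖z‖ := by
    simpa [dist_eq_norm] using hu.dist_le_mul x hx (x - z) hz
  simpa [nlIntegrand, abs_of_nonneg hρ] using
    norm_div_norm_sq_mul_smul_le (r := ρ z) K.coe_nonneg hlip

lemma integrableOn_nlIntegrand {K : ℝ≥0} (hΩ : MeasurableSet Ω) (hu : LipschitzOnWith K u Ω)
    (hx : x ∈ Ω) (hρ0 : ∀ z, 0 ≤ ρ z) (hρ : Integrable ρ) :
    IntegrableOn (nlIntegrand ρ u x) ((x - ·) ⁻¹' Ω) := by
  have hS : MeasurableSet ((x - ·) ⁻¹' Ω) := measurable_const.sub measurable_id hΩ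
  have hcont : ContinuousOn (fun z => u x - u (x - z)) ((x - ·) ⁻¹' Ω) :=
    continuousOn_const.sub (hu.continuousOn.comp (by fun_prop) fun _ hz => hz)
  have hmeas : AEStronglyMeasurable (nlIntegrand ρ u x) (volume.restrict ((x - ·) ⁻¹' Ω)) :=
    (((hcont.aestronglyMeasurable hS).mul (by fun_prop : Measurable fun z : Euc D =>
      (‖z‖ ^ 2)⁻¹).aestronglyMeasurable).mul hρ.1.restrict).smul aestronglyMeasurable_id
  exact (hρ.const_mul K).integrableOn.mono' hmeas
    (ae_restrict_of_forall_mem hS fun z hz => norm_nlIntegrand_le hu hx hz (hρ0 z))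

lemma norm_setIntegral_sdiff_ball_nlIntegrand_le {K : ℝ≥0} {δ : ℝ} (hΩ : MeasurableSet Ω)
    (hu : LipschitzOnWith K u Ω) (hx : x ∈ Ω) (hρ0 : ∀ z, 0 ≤ ρ z) (hρ : Integrable ρ) :
    ‖∫ z in (x - ·) ⁻¹' Ω \ ball 0 δ, nlIntegrand ρ u x z‖ ≤ K * ∫ z in (ball 0 δ)ᶜ, ρ z := by
  have hS : MeasurableSet ((x - ·) ⁻¹' Ω \ ball 0 δ) :=
    (measurable_const.sub measurable_id hΩ).diff measurableSet_ball
  refine (norm_setIntegral_le_of_norm_le_mul hS hρ.integrableOn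
    fun z hz => norm_nlIntegrand_le hu hx hz.1 (hρ0 z)).trans
    (mul_le_mul_of_nonneg_left ?_ K.coe_nonneg)
  exact setIntegral_mono_set hρ.integrableOn (Eventually.of_forall hρ0)
    (LE.le.eventuallyLE fun z hz => hz.2)

lemma norm_smul_setIntegral_nlIntegrand_sub_le {δ η : ℝ} (hρ0 : ∀ z, 0 ≤ ρ z)
    (hρ : Integrable ρ) (hrad : ∀ a b : Euc D, ‖a‖ = ‖b‖ → ρ a = ρ b)
    (hint : IntegrableOn (nlIntegrand ρ u x) (ball 0 δ))
    (hdiff : ∀ w ∈ ball x δ, DifferentiableAt ℝ u w)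
    (hη : ∀ w ∈ ball x δ, ‖fderiv ℝ u w - fderiv ℝ u x‖ ≤ η) :
    ‖(D : ℝ) • (∫ z in ball 0 δ, nlIntegrand ρ u x z) - (∫ z in ball 0 δ, ρ z) • gradient u x‖
      ≤ D * η * ∫ z in ball 0 δ, ρ z := by
  set g := gradient u x
  set Φ : Euc D → Euc D := fun z => (inner ℝ g z / ‖z‖ ^ 2 * ρ z) • z
  have hrem : ∀ z ∈ ball (0 : Euc D) δ, ‖nlIntegrand ρ u x z - Φ z‖ ≤ η * ρ z := by
    intro z hz
    rw [mem_ball_zero_iff] at hz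
    have hη0 : 0 ≤ η :=
      (norm_nonneg _).trans (hη x (mem_ball_self ((norm_nonneg z).trans_lt hz)))
    have hsub : nlIntegrand ρ u x z - Φ z
        = ((u x - u (x - z) - inner ℝ g z) / ‖z‖ ^ 2 * ρ z) • z := by
      simp only [nlIntegrand, Φ, ← sub_smul]
      ring_nf
    have := norm_div_norm_sq_mul_smul_le (r := ρ z) hη0
      (abs_sub_sub_inner_gradient_le hdiff hη hz)
    rw [hsub]
    rwa [abs_of_nonneg (hρ0 z)] at this
  calc ‖(D : ℝ) • (∫ z in ball 0 δ, nlIntegrand ρ u x z) - (∫ z in ball 0 δ, ρ z) • g‖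
      = D * ‖∫ z in ball 0 δ, (nlIntegrand ρ u x z - Φ z)‖ := by
        rw [← smul_setIntegral_ball_inner_div_norm_sq_mul_smul hρ hrad, ← smul_sub,
          ← integral_sub hint (integrable_inner_div_norm_sq_mul_smul hρ g).integrableOn, norm_smul,
          Real.norm_natCast]
    _ ≤ D * (η * ∫ z in ball 0 δ, ρ z) := by
        gcongr
        exact norm_setIntegral_le_of_norm_le_mul measurableSet_ball hρ.integrableOn hrem
    _ = D * η * ∫ z in ball 0 δ, ρ z := by ring

theorem norm_nlGrad_sub_gradient_le {K : ℝ≥0} {δ η : ℝ} (hΩ : MeasurableSet Ω)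
    (hu : LipschitzOnWith K u Ω) (hρ0 : ∀ z, 0 ≤ ρ z)
    (hrad : ∀ a b : Euc D, ‖a‖ = ‖b‖ → ρ a = ρ b) (hρ1 : ∫ z, ρ z = 1) (hδ : 0 < δ)
    (hball : ball x δ ⊆ Ω) (hdiff : ∀ w ∈ ball x δ, DifferentiableAt ℝ u w)
    (hη : ∀ w ∈ ball x δ, ‖fderiv ℝ u w - fderiv ℝ u x‖ ≤ η) :
    ‖nlGrad D Ω ρ u x - gradient u x‖
      ≤ D * η + (D * K + ‖gradient u x‖) * ∫ z in (ball 0 δ)ᶜ, ρ z := by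
  have hρ : Integrable ρ := integrable_of_integral_eq_one hρ1
  set S := (x - ·) ⁻¹' Ω
  set B := ball (0 : Euc D) δ
  set c := ∫ z in Bᶜ, ρ z
  set g := gradient u x
  have hx : x ∈ Ω := hball (mem_ball_self hδ)
  have hBS : B ⊆ S := fun z hz => hball (by simpa [B, dist_eq_norm] using hz)
  have hint := integrableOn_nlIntegrand hΩ hu hx hρ0 hρ
  have hmassB : ∫ z in B, ρ z = 1 - c := by
    rw [← hρ1, ← integral_add_compl measurableSet_ball hρ]
    ring
  have hmassB_le_one : ∫ z in B, ρ z ≤ 1 := by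
    rw [hmassB, sub_le_self_iff]
    exact setIntegral_nonneg measurableSet_ball.compl fun z _ => hρ0 z
  have hnear := norm_smul_setIntegral_nlIntegrand_sub_le hρ0 hρ hrad (hint.mono_set hBS) hdiff hη
  have hfar := norm_setIntegral_sdiff_ball_nlIntegrand_le (δ := δ) hΩ hu hx hρ0 hρ
  have hsplit : nlGrad D Ω ρ u x - g
      = ((D : ℝ) • (∫ z in B, nlIntegrand ρ u x z) - (∫ z in B, ρ z) • g)
        + (D : ℝ) • (∫ z in S \ B, nlIntegrand ρ u x z) - c • g := by
    rw [nlGrad_eq_smul_setIntegral_nlIntegrand, setIntegral_sdiff measurableSet_ball hint hBS,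
      hmassB]
    module
  have hη0 : 0 ≤ η := (norm_nonneg _).trans (hη x (mem_ball_self hδ))
  have hc0 : 0 ≤ c := setIntegral_nonneg measurableSet_ball.compl fun z _ => hρ0 z
  calc ‖nlGrad D Ω ρ u x - g‖
      ≤ ‖(D : ℝ) • (∫ z in B, nlIntegrand ρ u x z) - (∫ z in B, ρ z) • g‖
        + ‖(D : ℝ) • ∫ z in S \ B, nlIntegrand ρ u x z‖ + ‖c • g‖ := by
        rw [hsplit]
        exact norm_sub_le_of_le (norm_add_le _ _) le_rfl
    _ ≤ D * η * 1 + D * (K * c) + c * ‖g‖ := by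
        rw [norm_smul, norm_smul, Real.norm_natCast, Real.norm_of_nonneg hc0]
        gcongr
        exact hnear.trans (by gcongr)
    _ = D * η + (D * K + ‖g‖) * c := by ring

end NonlocalGradient

lemma IsKernelSeq.tendsto_setIntegral_compl_ball {D : ℕ} {ρ : ℕ → Euc D → ℝ}
    (hρ : IsKernelSeq D ρ) {δ : ℝ} (hδ : 0 < δ) :
    Tendsto (fun n => ∫ z in (ball (0 : Euc D) δ)ᶜ, ρ n z) atTop (𝓝 0) := by
  refine tendsto_of_tendsto_of_tendsto_of_le_of_le tendsto_const_nhds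
    (hρ.tail (δ / 2) (by positivity))
    (fun n => setIntegral_nonneg measurableSet_ball.compl fun z _ => hρ.nonneg n z) fun n => ?_
  have hsub : (ball (0 : Euc D) δ)ᶜ ⊆ {z | δ / 2 < ‖z‖} := fun z hz => by
    simp only [Set.mem_compl_iff, mem_ball_zero_iff, not_lt] at hz
    exact (half_lt_self hδ).trans_le hz
  exact setIntegral_mono_set (integrable_of_integral_eq_one (hρ.integral_one n)).integrableOn
    (Eventually.of_forall (hρ.nonneg n)) (LE.le.eventuallyLE hsub)

theorem tendstoUniformlyOn_nlGrad_gradient {D : ℕ} {Ω V : Set (Euc D)} {ρ : ℕ → Euc D → ℝ}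
    {u : Euc D → ℝ} {K : ℝ≥0} (hρ : IsKernelSeq D ρ) (hΩ : IsOpen Ω)
    (hu : LipschitzOnWith K u Ω) (hC1 : ContDiffOn ℝ 1 u Ω) (hV : IsCompact V) (hVΩ : V ⊆ Ω) :
    TendstoUniformlyOn (fun n => nlGrad D Ω (ρ n) u) (gradient u) atTop V := by
  rw [Metric.tendstoUniformlyOn_iff]
  intro ε hε
  set η := ε / (2 * (D + 1))
  obtain ⟨δ, hδ, hδV⟩ := hV.exists_forall_ball_subset_dist_lt hΩ hVΩ
    (hC1.continuousOn_fderiv_of_isOpen hΩ le_rfl) (by positivity : 0 < η)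
  obtain ⟨B, hB⟩ := hV.exists_bound_of_continuousOn ((hC1.continuousOn_gradient hΩ).mono hVΩ)
  have hsmall : ∀ᶠ n in atTop, (D * K + B) * ∫ z in (ball (0 : Euc D) δ)ᶜ, ρ n z < ε / 2 := by
    have := (hρ.tendsto_setIntegral_compl_ball hδ).const_mul (D * K + B)
    rw [mul_zero] at this
    exact this.eventually (gt_mem_nhds (half_pos hε))
  filter_upwards [hsmall] with n hn x hx
  obtain ⟨hball, hclose⟩ := hδV x hx
  have hdiff : ∀ w ∈ ball x δ, DifferentiableAt ℝ u w := fun w hw =>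
    (hC1.differentiableOn one_ne_zero w (hball hw)).differentiableAt (hΩ.mem_nhds (hball hw))
  rw [dist_comm, dist_eq_norm]
  calc ‖nlGrad D Ω (ρ n) u x - gradient u x‖
      ≤ D * η + (D * K + ‖gradient u x‖) * ∫ z in (ball 0 δ)ᶜ, ρ n z :=
        norm_nlGrad_sub_gradient_le hΩ.measurableSet hu (hρ.nonneg n) (hρ.radial n)
          (hρ.integral_one n) hδ hball hdiff fun w hw => by
            rw [← dist_eq_norm]
            exact (hclose w hw).le
    _ ≤ D * η + (D * K + B) * ∫ z in (ball 0 δ)ᶜ, ρ n z := by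
        gcongr
        · exact setIntegral_nonneg measurableSet_ball.compl fun z _ => hρ.nonneg n z
        · exact hB x hx
    _ < ε := by
        have : (D : ℝ) * η < ε / 2 := by
          rw [mul_div_assoc', div_lt_div_iff₀ (by positivity) two_pos]
          nlinarith
        linarith

theorem tendsto_iterate_of_tendstoUniformlyOn {ι E : Type*} [NormedAddCommGroup E]
    [NormedSpace ℝ E] {l : Filter ι} {F : ι → E → E} {f : E → E} {V : Set E}
    (hF : TendstoUniformlyOn F f l V) (hf : ContinuousOn f V) (α : ℕ → ℝ) {x : ℕ → E}
    {xn : ι → ℕ → E} (hinit : ∀ n, xn n 0 = x 0) (hiter : ∀ k, x (k + 1) = x k - α k • f (x k))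
    (hitern : ∀ n k, xn n (k + 1) = xn n k - α k • F n (xn n k)) (hinV : ∀ k, x k ∈ V)
    (hinVn : ∀ n k, xn n k ∈ V) (m : ℕ) :
    Tendsto (fun n => xn n m) l (𝓝 (x m)) := by
  induction m with
  | zero => simp only [hinit, tendsto_const_nhds]
  | succ m ih =>
    have hwithin : Tendsto (fun n => xn n m) l (𝓝[V] x m) :=
      tendsto_nhdsWithin_iff.2 ⟨ih, Eventually.of_forall fun n => hinVn n m⟩
    simp only [hiter, hitern]
    exact ih.sub ((hF.tendsto_comp (hf (x m) (hinV m)) hwithin).const_smul (α m))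

theorem nonlocal_gd_suboptimal_stepsize_comparison_general
    (D : ℕ) (Ω : Set (Euc D)) (hΩ : NiceDomain D Ω)
    (ρ : ℕ → Euc D → ℝ) (hρ : IsKernelSeq D ρ)
    (M : ℝ) (u : Euc D → ℝ)
    (hC2 : ContDiffOn ℝ 2 u Ω)
    (hLip : ∀ x ∈ Ω, ∀ y ∈ Ω, |u x - u y| ≤ M * ‖x - y‖)
    (α : ℕ → ℝ)
    (x₀ : Euc D)
    (x : ℕ → Euc D) (xn : ℕ → ℕ → Euc D)
    (hinit : x 0 = x₀) (hinitn : ∀ n, xn n 0 = x₀)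
    (hiter : ∀ k, x (k + 1) = x k - α k • gradient u (x k))
    (hitern : ∀ n k, xn n (k + 1) = xn n k - α k • nlGrad D Ω (ρ n) u (xn n k))
    (V : Set (Euc D)) (hV : IsCompact V) (hVΩ : V ⊆ Ω)
    (hinV : ∀ k, x k ∈ V) (hinVn : ∀ n k, xn n k ∈ V) :
    ∀ k : ℕ, ∀ ε : ℝ, 0 < ε → ∃ N : ℕ, ∀ n > N,
      ∀ m : ℕ, 1 ≤ m → m ≤ k + 1 → ‖x m - xn n m‖ < ε := by
  have hlip : LipschitzOnWith (Real.toNNReal M) u Ω := LipschitzOnWith.of_dist_le_mul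
    fun a ha b hb => by
      rw [Real.dist_eq, dist_eq_norm]
      exact (hLip a ha b hb).trans (by gcongr; exact Real.le_coe_toNNReal M)
  have hC1 : ContDiffOn ℝ 1 u Ω := hC2.of_le one_le_two
  have hconv := tendsto_iterate_of_tendstoUniformlyOn
    (tendstoUniformlyOn_nlGrad_gradient hρ hΩ.isOpen hlip hC1 hV hVΩ)
    ((hC1.continuousOn_gradient hΩ.isOpen).mono hVΩ) α (fun n => by rw [hinitn, hinit])
    hiter hitern hinV hinVn
  intro k ε hε
  have hclose : ∀ᶠ n in atTop, ∀ m ∈ Set.Iic (k + 1), ‖x m - xn n m‖ < ε :=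
    (Set.finite_Iic _).eventually_all.2 fun m _ => by
      simpa only [dist_eq_norm'] using Metric.tendsto_nhds.1 (hconv m) ε hε
  obtain ⟨N, hN⟩ := eventually_atTop.1 hclose
  exact ⟨N, fun n hn m _ hm => hN n hn.le m hm⟩

/-- suboptimal-stepsize comparison of classical and nonlocal gradient descent.
For `u ∈ C²(Ω) ∩ Lip(Ω, M)`, identical initialization and identical stepsizes with
`Σ_{m=1}^K α^m < 1` for all `K`, the iterates of nonlocal gradient descent get arbitrarily
close to those of classical gradient descent, uniformly over the first `k+1` iterates,
for `n` large enough. -/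
theorem nonlocal_gd_suboptimal_stepsize_comparison
    (D : ℕ) (hD : 0 < D) (Ω : Set (Euc D)) (hΩ : NiceDomain D Ω)
    (ρ : ℕ → Euc D → ℝ) (hρ : IsKernelSeq D ρ)
    (M : ℝ) (u : Euc D → ℝ)
    (hC2 : ContDiffOn ℝ 2 u Ω)
    (hLip : ∀ x ∈ Ω, ∀ y ∈ Ω, |u x - u y| ≤ M * ‖x - y‖)
    (α : ℕ → ℝ) (hα : ∀ k, 0 < α k)
    (hsum : ∀ K : ℕ, ∑ m ∈ Finset.range K, α m < 1)
    (x₀ : Euc D) (hx₀ : x₀ ∈ Ω)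
    (x : ℕ → Euc D) (xn : ℕ → ℕ → Euc D)
    (hinit : x 0 = x₀) (hinitn : ∀ n, xn n 0 = x₀)
    (hiter : ∀ k, x (k + 1) = x k - α k • gradient u (x k))
    (hitern : ∀ n k, xn n (k + 1) = xn n k - α k • nlGrad D Ω (ρ n) u (xn n k))
    (V : Set (Euc D)) (hV : IsCompact V) (hVΩ : V ⊆ Ω)
    (hinV : ∀ k, x k ∈ V) (hinVn : ∀ n k, xn n k ∈ V) :
    ∀ k : ℕ, ∀ ε : ℝ, 0 < ε → ∃ N : ℕ, ∀ n > N,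
      ∀ m : ℕ, 1 ≤ m → m ≤ k + 1 → ‖x m - xn n m‖ < ε :=
  nonlocal_gd_suboptimal_stepsize_comparison_general D Ω hΩ ρ hρ M u hC2 hLip α x₀ x xn hinit hinitn
    hiter hitern V hV hVΩ hinV hinVn

end
end
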